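/- Let D be a totally ordered integral domain and S a Specker D-algebra. There exists a unique partial ordering ≤ on S making S into an f-algebra over D, namely s ≤ t iff t − s has an orthogonal decomposition with nonnegative coefficients; moreover this ordering restricts to the usual boolean ordering on Id(S). -/

import Mathlib

open Finset

/-- A `D`-algebra `S` is torsion-free as a `D`-module. -/
def SpTorsionFree (D S : Type*) [CommRing D] [CommRing S] [Algebra D S] : Prop :=
  ∀ (a : D) (s : S), a • s = 0 → a = 0 ∨ s = 0

/-- `S` is generated as a `D`-algebra by its idempotents. -/
def SpIdemGenerated (D S : Type*) [CommRing D] [CommRing S] [Algebra D S] : Prop :=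
  Algebra.adjoin D {e : S | IsIdempotentElem e} = ⊤

/-- A Specker `D`-algebra: commutative unital, torsion-free, idempotent-generated. -/
def IsSpecker (D S : Type*) [CommRing D] [CommRing S] [Algebra D S] : Prop :=
  SpTorsionFree D S ∧ SpIdemGenerated D S

/-- The idempotents of `S`. -/
abbrev IdemOf (S : Type*) [Monoid S] := {e : S // IsIdempotentElem e}

/-- A full orthogonal decomposition of `s` with pairwise distinct coefficients and
nonzero pairwise orthogonal idempotents summing (= joining) to `1`. -/
def FullOrthDecomp (D S : Type*) [CommRing D] [CommRing S] [Algebra D S] {n : ℕ}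
    (a : Fin n → D) (e : Fin n → S) (s : S) : Prop :=
  Function.Injective a ∧ (∀ i, IsIdempotentElem (e i)) ∧ (∀ i, e i ≠ 0) ∧
    (∀ i j, i ≠ j → e i * e j = 0) ∧ (∑ i, e i = 1) ∧ s = ∑ i, a i • e i

/-- `s` has an orthogonal decomposition with nonnegative coefficients. -/
def OrthNonnegDecomp (D S : Type*) [CommRing D] [LinearOrder D] [IsStrictOrderedRing D] [CommRing S] [Algebra D S]
    (s : S) : Prop :=
  ∃ (n : ℕ) (a : Fin n → D) (e : Fin n → S),
    (∀ i, 0 ≤ a i) ∧ (∀ i, IsIdempotentElem (e i)) ∧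
    (∀ i j, i ≠ j → e i * e j = 0) ∧ s = ∑ i, a i • e i

/-- The canonical f-algebra order relation on a Specker algebra. -/
def specLE (D S : Type*) [CommRing D] [LinearOrder D] [IsStrictOrderedRing D] [CommRing S] [Algebra D S]
    (s t : S) : Prop :=
  OrthNonnegDecomp D S (t - s)

section Rel
variable {S : Type*}
def relUB (le : S → S → Prop) (A : Set S) (u : S) : Prop := ∀ x ∈ A, le x u
def relLB (le : S → S → Prop) (A : Set S) (u : S) : Prop := ∀ x ∈ A, le u x
def relIsLUB (le : S → S → Prop) (A : Set S) (u : S) : Prop :=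
  relUB le A u ∧ ∀ v, relUB le A v → le u v
def relIsGLB (le : S → S → Prop) (A : Set S) (u : S) : Prop :=
  relLB le A u ∧ ∀ v, relLB le A v → le v u
end Rel

/-- A function `D → B` belonging to Foster's boolean power `D[B]*`:
finitely valued, pairwise disjoint values, values join to `⊤`. -/
def IsBPFn (D B : Type*) [CommRing D] [BooleanAlgebra B] (f : D → B) : Prop :=
  (Set.range f).Finite ∧ (∀ a b : D, a ≠ b → f a ⊓ f b = ⊥) ∧ IsLUB (Set.range f) ⊤

/-- Foster's boolean power `D[B]*` as a set of functions. -/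
def DBStar (D B : Type*) [CommRing D] [BooleanAlgebra B] : Type _ :=
  {f : D → B // IsBPFn D B f}

/-- The boolean-power `D`-algebra operations on `D[B]*`, characterized via least upper bounds. -/
def FosterOps (D B : Type*) [CommRing D] [BooleanAlgebra B]
    [CommRing (DBStar D B)] [Algebra D (DBStar D B)] : Prop :=
  (∀ f g : DBStar D B, ∀ a : D,
      IsLUB {x : B | ∃ b c : D, b + c = a ∧ x = f.1 b ⊓ g.1 c} ((f + g).1 a)) ∧
  (∀ f g : DBStar D B, ∀ a : D,
      IsLUB {x : B | ∃ b c : D, b * c = a ∧ x = f.1 b ⊓ g.1 c} ((f * g).1 a)) ∧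
  (∀ (b : D) (f : DBStar D B) (a : D),
      IsLUB {x : B | ∃ c : D, b * c = a ∧ x = f.1 c} ((b • f).1 a))

/-- Decreasing step functions `D → B` determined by a chain `1 = e₀ > e₁ > ⋯ > eₙ > 0`
and thresholds `a₀ < a₁ < ⋯ < aₙ`. -/
def IsFlatFn (D B : Type*) [CommRing D] [LinearOrder D] [IsStrictOrderedRing D] [BooleanAlgebra B] (f : D → B) : Prop :=
  ∃ (n : ℕ) (a : Fin (n + 1) → D) (e : Fin (n + 1) → B),
    StrictMono a ∧ StrictAnti e ∧ e 0 = ⊤ ∧ ⊥ < e (Fin.last n) ∧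
    (∀ x : D, x ≤ a 0 → f x = ⊤) ∧
    (∀ (i : Fin n) (x : D), a i.castSucc < x → x ≤ a i.succ → f x = e i.succ) ∧
    (∀ x : D, a (Fin.last n) < x → f x = ⊥)

/-- The de Vries power `D[B]♭` as a set of decreasing step functions. -/
def DBFlat (D B : Type*) [CommRing D] [LinearOrder D] [IsStrictOrderedRing D] [BooleanAlgebra B] : Type _ :=
  {f : D → B // IsFlatFn D B f}

/-- A proximity on a torsion-free f-algebra over `D` (axioms (P1)–(P10)). -/
def IsProximity (D S : Type*) [CommRing D] [LinearOrder D] [IsStrictOrderedRing D] [CommRing S] [Algebra D S]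
    [Lattice S] (r : S → S → Prop) : Prop :=
  (r 0 0 ∧ r 1 1) ∧
  (∀ s t : S, r s t → s ≤ t) ∧
  (∀ s t u v : S, s ≤ t → r t u → u ≤ v → r s v) ∧
  (∀ s t u : S, r s t → r s u → r s (t ⊓ u)) ∧
  (∀ s t : S, r s t → r (-t) (-s)) ∧
  (∀ s t u v : S, r s t → r u v → r (s + u) (t + v)) ∧
  (∀ (s t : S) (a : D), 0 < a → r s t → r (a • s) (a • t)) ∧
  (∀ s t : S, (∃ a : D, 0 < a ∧ r (a • s) (a • t)) → r s t) ∧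
  (∀ s t u v : S, 0 ≤ s → 0 ≤ t → 0 ≤ u → 0 ≤ v → r s t → r u v → r (s * u) (t * v)) ∧
  (∀ s t : S, r s t → ∃ u, r s u ∧ r u t) ∧
  (∀ s : S, 0 < s → ∃ t, 0 < t ∧ r t s)

/-- A de Vries proximity on a boolean algebra. -/
def IsDeVriesProx (B : Type*) [BooleanAlgebra B] (p : B → B → Prop) : Prop :=
  (p ⊥ ⊥ ∧ p ⊤ ⊤) ∧
  (∀ a b : B, p a b → a ≤ b) ∧
  (∀ a b c d : B, a ≤ b → p b c → c ≤ d → p a d) ∧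
  (∀ a b c : B, p a b → p a c → p a (b ⊓ c)) ∧
  (∀ a b : B, p a b → p bᶜ aᶜ) ∧
  (∀ a b : B, p a b → ∃ c, p a c ∧ p c b) ∧
  (∀ a : B, a ≠ ⊥ → ∃ b, b ≠ ⊥ ∧ p b a)

/-- A Baer ring: the annihilator of every ideal is generated by an idempotent. -/
def IsBaer (S : Type*) [CommRing S] : Prop :=
  ∀ I : Ideal S, ∃ e : S, IsIdempotentElem e ∧
    ∀ r : S, (∀ s ∈ I, r * s = 0) ↔ ∃ x : S, r = x * e

/-- Proximity morphisms between proximity (Baer-)Specker algebras (axioms (M1)–(M7)). -/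
def IsProxMorphism (D S T : Type*) [CommRing D] [LinearOrder D] [IsStrictOrderedRing D]
    [CommRing S] [Algebra D S] [CommRing T] [Algebra D T] [Lattice S] [Lattice T]
    (rS : S → S → Prop) (rT : T → T → Prop) (α : S → T) : Prop :=
  α 0 = 0 ∧
  (∀ s t : S, α (s ⊓ t) = α s ⊓ α t) ∧
  (∀ s t : S, rS s t → rT (-(α (-s))) (α t)) ∧
  (∀ t : S, IsLUB {x : T | ∃ s : S, rS s t ∧ x = α s} (α t)) ∧
  (∀ (s : S) (a : D), α (s + algebraMap D S a) = α s + algebraMap D T a) ∧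
  (∀ (s : S) (a : D), 0 ≤ a → α (a • s) = a • α s) ∧
  (∀ (s : S) (a : D), α (s ⊔ algebraMap D S a) = α s ⊔ algebraMap D T a)

/-- `(S, ≤)` is an f-algebra over `D` (lattice + ℓ-algebra + f-ring conditions). -/
def IsFAlgebraOrder (D S : Type*) [CommRing D] [LinearOrder D] [IsStrictOrderedRing D] [CommRing S] [Algebra D S]
    (iP : PartialOrder S) : Prop := by
  letI := iP
  exact (∀ s t : S, ∃ x, IsLUB {s, t} x) ∧
    (∀ s t : S, ∃ x, IsGLB {s, t} x) ∧
    (∀ s t r : S, s ≤ t → s + r ≤ t + r) ∧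
    (∀ s t : S, 0 ≤ s → 0 ≤ t → 0 ≤ s * t) ∧
    (∀ (a : D) (s : S), 0 ≤ a → 0 ≤ s → 0 ≤ a • s) ∧
    (∀ r s t : S, IsGLB {s, t} (0 : S) → 0 ≤ r → IsGLB {r * s, t} (0 : S))

/-- The order is given by nonnegative orthogonal decompositions of differences. -/
def OrderEqDecomp (D S : Type*) [CommRing D] [LinearOrder D] [IsStrictOrderedRing D] [CommRing S] [Algebra D S]
    (iP : PartialOrder S) : Prop := by
  letI := iP
  exact ∀ s t : S, s ≤ t ↔ OrthNonnegDecomp D S (t - s)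

/-- The order restricts to the usual boolean order on idempotents. -/
def OrderIdemUsual (S : Type*) [CommRing S] (iP : PartialOrder S) : Prop := by
  letI := iP
  exact ∀ e f : S, IsIdempotentElem e → IsIdempotentElem f → (e ≤ f ↔ e * f = e)

/-!
Every element of a Specker algebra is a combination `∑ aᵢ • eᵢ` over a complete family of
orthogonal idempotents, and two such families have the common refinement `eᵢ * fⱼ`. Over a common
family, sups and infs are computed coefficientwise by `max` and `min`, and nonnegativity of `x`
can be tested on the pieces `x * eᵢ`; this makes the decomposition order an f-algebra order.

Conversely, in any f-algebra order squares are nonnegative: writing `a = a⁺ - a⁻` with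
`a⁺ ⊓ a⁻ = 0`, the f-ring axiom forces `a⁺ * a⁻ = 0`, so `a * a = a⁺ * a⁺ + a⁻ * a⁻`. Hence
idempotents are nonnegative, so every nonnegative decomposition is nonnegative; and if
`x = ∑ aᵢ • eᵢ ≥ 0` then `aᵢ • eᵢ = x * eᵢ ≥ 0`, which forces `aᵢ • eᵢ = 0` whenever `aᵢ < 0`.
So both orders have the same positive cone.
-/

section Idempotents

variable {S R ι κ : Type*} [CommRing S] [CommRing R] [Algebra R S] {e : ι → S} {f : κ → S}

lemma OrthogonalIdempotents.mul (he : OrthogonalIdempotents e) (hf : OrthogonalIdempotents f) :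
    OrthogonalIdempotents fun p : ι × κ => e p.1 * f p.2 where
  idem p := (he.idem p.1).mul (hf.idem p.2)
  ortho p q hpq := by
    rcases eq_or_ne p.1 q.1 with h | h
    · rw [mul_mul_mul_comm, hf.ortho fun h' => hpq (Prod.ext h h'), mul_zero]
    · rw [mul_mul_mul_comm, he.ortho h, zero_mul]

variable [Fintype ι] [Fintype κ]

lemma CompleteOrthogonalIdempotents.mul (he : CompleteOrthogonalIdempotents e)
    (hf : CompleteOrthogonalIdempotents f) :
    CompleteOrthogonalIdempotents fun p : ι × κ => e p.1 * f p.2 where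
  toOrthogonalIdempotents := he.1.mul hf.1
  complete := by simp [Fintype.sum_prod_type, ← Finset.mul_sum, hf.complete, he.complete]

lemma OrthogonalIdempotents.sum_smul_mul (he : OrthogonalIdempotents e) (a : ι → R) (k : ι) :
    (∑ i, a i • e i) * e k = a k • e k := by
  rw [Finset.sum_mul, Finset.sum_eq_single k (fun i _ hik => by rw [smul_mul_assoc, he.ortho hik,
    smul_zero]) (by simp), smul_mul_assoc, (he.idem k).eq]

lemma CompleteOrthogonalIdempotents.sum_mul_eq_self (he : CompleteOrthogonalIdempotents e) (x : S) :
    ∑ i, x * e i = x := by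
  rw [← Finset.mul_sum, he.complete, mul_one]

lemma CompleteOrthogonalIdempotents.sum_smul_eq_sum_smul_mul_left
    (hf : CompleteOrthogonalIdempotents f) (a : ι → R) (e : ι → S) :
    ∑ i, a i • e i = ∑ p : ι × κ, a p.1 • (e p.1 * f p.2) := by
  simp_rw [Fintype.sum_prod_type, ← Finset.smul_sum, ← Finset.mul_sum, hf.complete, mul_one]

lemma CompleteOrthogonalIdempotents.sum_smul_eq_sum_smul_mul_right
    (he : CompleteOrthogonalIdempotents e) (b : κ → R) (f : κ → S) :
    ∑ j, b j • f j = ∑ p : ι × κ, b p.2 • (e p.1 * f p.2) := by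
  simp_rw [Fintype.sum_prod_type_right, ← Finset.smul_sum, ← Finset.sum_mul, he.complete, one_mul]

lemma sum_smul_mul_sum_smul (a : ι → R) (b : κ → R) (e : ι → S) (f : κ → S) :
    (∑ i, a i • e i) * ∑ j, b j • f j = ∑ p : ι × κ, (a p.1 * b p.2) • (e p.1 * f p.2) := by
  simp_rw [Finset.sum_mul_sum, Fintype.sum_prod_type, smul_mul_smul_comm]

end Idempotents

section Decomposition

variable {D S : Type*} [CommRing D] [CommRing S] [Algebra D S]

lemma exists_completeOrthogonalIdempotents_sum_smul (hS : SpIdemGenerated D S) (s : S) :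
    ∃ (ι : Type) (_ : Fintype ι) (e : ι → S) (a : ι → D),
      CompleteOrthogonalIdempotents e ∧ s = ∑ i, a i • e i := by
  have hs : s ∈ Algebra.adjoin D {e : S | IsIdempotentElem e} := hS ▸ Algebra.mem_top
  induction hs using Algebra.adjoin_induction with
  | mem x hx =>
    exact ⟨Fin 2, _, ![x, 1 - x], ![1, 0], .of_isIdempotentElem hx, by simp [Fin.sum_univ_two]⟩
  | algebraMap r =>
    exact ⟨Unit, _, fun _ => 1, fun _ => r, CompleteOrthogonalIdempotents.unique_iff.2 rfl,
      by simp [Algebra.algebraMap_eq_smul_one]⟩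
  | add x y _ _ ihx ihy =>
    obtain ⟨ι, _, e, a, he, rfl⟩ := ihx
    obtain ⟨κ, _, f, b, hf, rfl⟩ := ihy
    refine ⟨ι × κ, _, _, fun p => a p.1 + b p.2, he.mul hf, ?_⟩
    rw [hf.sum_smul_eq_sum_smul_mul_left a e, he.sum_smul_eq_sum_smul_mul_right b f,
      ← Finset.sum_add_distrib]
    simp_rw [add_smul]
  | mul x y _ _ ihx ihy =>
    obtain ⟨ι, _, e, a, he, rfl⟩ := ihx
    obtain ⟨κ, _, f, b, hf, rfl⟩ := ihy
    exact ⟨ι × κ, _, _, _, he.mul hf, sum_smul_mul_sum_smul a b e f⟩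

lemma exists_completeOrthogonalIdempotents_sum_smul_pair (hS : SpIdemGenerated D S) (s t : S) :
    ∃ (ι : Type) (_ : Fintype ι) (e : ι → S) (a b : ι → D),
      CompleteOrthogonalIdempotents e ∧ s = ∑ i, a i • e i ∧ t = ∑ i, b i • e i := by
  obtain ⟨ι, _, e, a, he, rfl⟩ := exists_completeOrthogonalIdempotents_sum_smul hS s
  obtain ⟨κ, _, f, b, hf, rfl⟩ := exists_completeOrthogonalIdempotents_sum_smul hS t
  exact ⟨ι × κ, _, _, _, _, he.mul hf, hf.sum_smul_eq_sum_smul_mul_left a e,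
    he.sum_smul_eq_sum_smul_mul_right b f⟩

end Decomposition

section Cone

variable {D S : Type*} [CommRing D] [LinearOrder D] [IsStrictOrderedRing D] [CommRing S]
  [Algebra D S]

lemma orthNonnegDecomp_sum_smul {ι : Type*} [Fintype ι] {e : ι → S} (he : OrthogonalIdempotents e)
    {a : ι → D} (ha : ∀ i, 0 ≤ a i) : OrthNonnegDecomp D S (∑ i, a i • e i) :=
  let g := (Fintype.equivFin ι).symm
  ⟨_, a ∘ g, e ∘ g, fun _ => ha _, fun _ => he.idem _, fun _ _ hij => he.ortho (g.injective.ne hij),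
    (g.sum_comp fun i => a i • e i).symm⟩

lemma IsIdempotentElem.orthNonnegDecomp {x : S} (hx : IsIdempotentElem x) :
    OrthNonnegDecomp D S x := by
  simpa using orthNonnegDecomp_sum_smul (e := fun _ : Unit => x) (OrthogonalIdempotents.unique.2 hx)
    (a := fun _ => (1 : D)) fun _ => zero_le_one

namespace OrthNonnegDecomp

lemma exists_complete {s : S} (hs : OrthNonnegDecomp D S s) :
    ∃ (ι : Type) (_ : Fintype ι) (e : ι → S) (a : ι → D),
      CompleteOrthogonalIdempotents e ∧ (∀ i, 0 ≤ a i) ∧ s = ∑ i, a i • e i := by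
  obtain ⟨n, a, e, ha, hidem, horth, rfl⟩ := hs
  refine ⟨Option (Fin n), _, _, (Option.elim · 0 a),
    .option ⟨hidem, fun i j => horth i j⟩, fun i => ?_, by simp [Fintype.sum_option]⟩
  cases i <;> simp [ha]

lemma add {s t : S} (hs : OrthNonnegDecomp D S s) (ht : OrthNonnegDecomp D S t) :
    OrthNonnegDecomp D S (s + t) := by
  obtain ⟨ι, _, e, a, he, ha, rfl⟩ := hs.exists_complete
  obtain ⟨κ, _, f, b, hf, hb, rfl⟩ := ht.exists_complete
  rw [hf.sum_smul_eq_sum_smul_mul_left a e, he.sum_smul_eq_sum_smul_mul_right b f,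
    ← Finset.sum_add_distrib]
  simp_rw [← add_smul]
  exact orthNonnegDecomp_sum_smul (he.mul hf).1 fun p => add_nonneg (ha p.1) (hb p.2)

lemma mul {s t : S} (hs : OrthNonnegDecomp D S s) (ht : OrthNonnegDecomp D S t) :
    OrthNonnegDecomp D S (s * t) := by
  obtain ⟨ι, _, e, a, he, ha, rfl⟩ := hs.exists_complete
  obtain ⟨κ, _, f, b, hf, hb, rfl⟩ := ht.exists_complete
  rw [sum_smul_mul_sum_smul]
  exact orthNonnegDecomp_sum_smul (he.mul hf).1 fun p => mul_nonneg (ha p.1) (hb p.2)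

lemma smul {c : D} (hc : 0 ≤ c) {s : S} (hs : OrthNonnegDecomp D S s) :
    OrthNonnegDecomp D S (c • s) := by
  obtain ⟨ι, _, e, a, he, ha, rfl⟩ := hs.exists_complete
  simp_rw [Finset.smul_sum, smul_smul]
  exact orthNonnegDecomp_sum_smul he.1 fun i => mul_nonneg hc (ha i)

lemma sum {ι : Type*} (s : Finset ι) {x : ι → S} (hx : ∀ i ∈ s, OrthNonnegDecomp D S (x i)) :
    OrthNonnegDecomp D S (∑ i ∈ s, x i) :=
  Finset.sum_induction _ _ (fun _ _ => add) IsIdempotentElem.zero.orthNonnegDecomp hx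

lemma of_forall_mul {ι : Type*} [Fintype ι] {e : ι → S} (he : CompleteOrthogonalIdempotents e)
    {x : S} (hx : ∀ i, OrthNonnegDecomp D S (x * e i)) : OrthNonnegDecomp D S x :=
  he.sum_mul_eq_self x ▸ sum _ fun i _ => hx i

lemma eq_zero_of_neg [NoZeroSMulDivisors D S] {s : S} (hs : OrthNonnegDecomp D S s)
    (hs' : OrthNonnegDecomp D S (-s)) : s = 0 := by
  obtain ⟨ι, _, e, a, he, ha, hse⟩ := hs.exists_complete
  obtain ⟨κ, _, f, b, hf, hb, hsf⟩ := hs'.exists_complete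
  rw [hf.sum_smul_eq_sum_smul_mul_left a e] at hse
  rw [he.sum_smul_eq_sum_smul_mul_right b f] at hsf
  have hsum : ∑ p : ι × κ, (a p.1 + b p.2) • (e p.1 * f p.2) = 0 := by
    simp_rw [add_smul, Finset.sum_add_distrib, ← hse, ← hsf, add_neg_cancel]
  rw [hse]
  refine Finset.sum_eq_zero fun p _ => ?_
  have hp := (he.mul hf).1.sum_smul_mul (a := fun p => a p.1 + b p.2) p
  rw [hsum, zero_mul, eq_comm, smul_eq_zero] at hp
  rcases hp with hab | hp
  · rw [le_antisymm (by linarith [hb p.2]) (ha p.1), zero_smul]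
  · rw [hp, smul_zero]

end OrthNonnegDecomp

end Cone

lemma isLUB_pair_iff {α : Type*} [Preorder α] {a b x : α} :
    IsLUB {a, b} x ↔ a ≤ x ∧ b ≤ x ∧ ∀ v, a ≤ v → b ≤ v → x ≤ v := by
  simp [IsLUB, IsLeast, upperBounds_insert, upperBounds_singleton, mem_lowerBounds, and_assoc]

lemma isGLB_pair_iff {α : Type*} [Preorder α] {a b x : α} :
    IsGLB {a, b} x ↔ x ≤ a ∧ x ≤ b ∧ ∀ v, v ≤ a → v ≤ b → v ≤ x := by
  simp [IsGLB, IsGreatest, lowerBounds_insert, lowerBounds_singleton, mem_upperBounds, and_assoc]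

section Lattice

variable {D S : Type*} [CommRing D] [LinearOrder D] [IsStrictOrderedRing D] [CommRing S]
  [Algebra D S] [PartialOrder S] {ι : Type*} [Fintype ι] {e : ι → S}

lemma isLUB_pair_sum_smul_max (hle : ∀ s t : S, s ≤ t ↔ OrthNonnegDecomp D S (t - s))
    (he : CompleteOrthogonalIdempotents e) (a b : ι → D) :
    IsLUB {∑ i, a i • e i, ∑ i, b i • e i} (∑ i, max (a i) (b i) • e i) := by
  simp only [isLUB_pair_iff, hle, ← Finset.sum_sub_distrib, ← sub_smul]
  refine ⟨orthNonnegDecomp_sum_smul he.1 fun i => sub_nonneg.2 (le_max_left _ _),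
    orthNonnegDecomp_sum_smul he.1 fun i => sub_nonneg.2 (le_max_right _ _),
    fun v hva hvb => OrthNonnegDecomp.of_forall_mul he fun i => ?_⟩
  rw [sub_mul, he.1.sum_smul_mul]
  rcases le_total (a i) (b i) with h | h
  · rw [max_eq_right h, ← he.1.sum_smul_mul b, ← sub_mul]
    exact hvb.mul (he.idem i).orthNonnegDecomp
  · rw [max_eq_left h, ← he.1.sum_smul_mul a, ← sub_mul]
    exact hva.mul (he.idem i).orthNonnegDecomp

lemma isGLB_pair_sum_smul_min (hle : ∀ s t : S, s ≤ t ↔ OrthNonnegDecomp D S (t - s))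
    (he : CompleteOrthogonalIdempotents e) (a b : ι → D) :
    IsGLB {∑ i, a i • e i, ∑ i, b i • e i} (∑ i, min (a i) (b i) • e i) := by
  simp only [isGLB_pair_iff, hle, ← Finset.sum_sub_distrib, ← sub_smul]
  refine ⟨orthNonnegDecomp_sum_smul he.1 fun i => sub_nonneg.2 (min_le_left _ _),
    orthNonnegDecomp_sum_smul he.1 fun i => sub_nonneg.2 (min_le_right _ _),
    fun v hva hvb => OrthNonnegDecomp.of_forall_mul he fun i => ?_⟩
  rw [sub_mul, he.1.sum_smul_mul (fun i => min (a i) (b i))]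
  rcases le_total (a i) (b i) with h | h
  · rw [min_eq_left h, ← he.1.sum_smul_mul a, ← sub_mul]
    exact hva.mul (he.idem i).orthNonnegDecomp
  · rw [min_eq_right h, ← he.1.sum_smul_mul b, ← sub_mul]
    exact hvb.mul (he.idem i).orthNonnegDecomp

end Lattice

section SpeckerOrder

variable {D S : Type*} [CommRing D] [LinearOrder D] [IsStrictOrderedRing D] [CommRing S]
  [Algebra D S]

lemma isGLB_mul_pair_zero [PartialOrder S] (hle : ∀ s t : S, s ≤ t ↔ OrthNonnegDecomp D S (t - s))
    (hS : SpIdemGenerated D S) {r s t : S} (hst : IsGLB {s, t} 0) (hr : 0 ≤ r) :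
    IsGLB {r * s, t} 0 := by
  obtain ⟨ι, _, e, a, b, he, rfl, rfl⟩ := exists_completeOrthogonalIdempotents_sum_smul_pair hS s t
  have hmin : ∑ i, min (a i) (b i) • e i = 0 := (isGLB_pair_sum_smul_min hle he a b).unique hst
  have hdisj (i : ι) : (∑ j, a j • e j) * e i = 0 ∨ (∑ j, b j • e j) * e i = 0 := by
    have hi := he.1.sum_smul_mul (fun j => min (a j) (b j)) i
    rw [hmin, zero_mul] at hi
    rw [he.1.sum_smul_mul, he.1.sum_smul_mul]
    rcases min_choice (a i) (b i) with h | h <;> rw [h] at hi <;> simp [← hi]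
  have hnonneg (x : S) : 0 ≤ x ↔ OrthNonnegDecomp D S x := by rw [hle, sub_zero]
  obtain ⟨hs, ht, -⟩ := isGLB_pair_iff.1 hst
  refine isGLB_pair_iff.2 ⟨(hnonneg _).2 (((hnonneg r).1 hr).mul ((hnonneg _).1 hs)), ht,
    fun v hvr hvt => ?_⟩
  rw [hle] at hvr hvt ⊢
  refine OrthNonnegDecomp.of_forall_mul he fun i => ?_
  rcases hdisj i with h | h
  · rw [show (0 - v) * e i = (r * ∑ j, a j • e j - v) * e i by
      rw [sub_mul, sub_mul, zero_mul, mul_assoc, h, mul_zero]]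
    exact hvr.mul (he.idem i).orthNonnegDecomp
  · rw [show (0 - v) * e i = (∑ j, b j • e j - v) * e i by rw [sub_mul, sub_mul, zero_mul, h]]
    exact hvt.mul (he.idem i).orthNonnegDecomp

variable (D S) in
abbrev specOrder [NoZeroSMulDivisors D S] : PartialOrder S where
  le := specLE D S
  le_refl s := by
    rw [specLE, sub_self]
    exact IsIdempotentElem.zero.orthNonnegDecomp
  le_trans s t u hst htu := by
    rw [specLE, ← sub_add_sub_cancel u t s]
    exact htu.add hst
  le_antisymm s t hst hts := (sub_eq_zero.1 (hst.eq_zero_of_neg (by rwa [neg_sub]))).symm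

theorem isFAlgebraOrder_specOrder [NoZeroSMulDivisors D S] (hS : SpIdemGenerated D S) :
    IsFAlgebraOrder D S (specOrder D S) := by
  unfold IsFAlgebraOrder
  let _ := specOrder D S
  have hle (s t : S) : s ≤ t ↔ OrthNonnegDecomp D S (t - s) := Iff.rfl
  have hnonneg (x : S) : 0 ≤ x ↔ OrthNonnegDecomp D S x := by rw [hle, sub_zero]
  refine ⟨fun s t => ?_, fun s t => ?_, fun s t r h => ?_, fun s t => ?_, fun a s ha => ?_,
    fun r s t => isGLB_mul_pair_zero hle hS⟩
  · obtain ⟨ι, _, e, a, b, he, rfl, rfl⟩ := exists_completeOrthogonalIdempotents_sum_smul_pair hS s t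
    exact ⟨_, isLUB_pair_sum_smul_max hle he a b⟩
  · obtain ⟨ι, _, e, a, b, he, rfl, rfl⟩ := exists_completeOrthogonalIdempotents_sum_smul_pair hS s t
    exact ⟨_, isGLB_pair_sum_smul_min hle he a b⟩
  · rwa [hle, add_sub_add_right_eq_sub]
  · simp only [hnonneg]
    exact OrthNonnegDecomp.mul
  · simp only [hnonneg]
    exact OrthNonnegDecomp.smul ha

theorem orderIdemUsual_specOrder [NoZeroSMulDivisors D S] : OrderIdemUsual S (specOrder D S) := by
  intro e f he hf
  change OrthNonnegDecomp D S (f - e) ↔ e * f = e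
  refine ⟨fun h => ?_, fun h => IsIdempotentElem.orthNonnegDecomp ?_⟩
  · have h1 : OrthNonnegDecomp D S (e * f - e) := by
      simpa [mul_sub, he.eq] using he.orthNonnegDecomp.mul h
    have h2 : OrthNonnegDecomp D S (-(e * f - e)) := by
      simpa [mul_sub] using (he.mul hf.one_sub).orthNonnegDecomp
    exact sub_eq_zero.1 (h1.eq_zero_of_neg h2)
  · rw [IsIdempotentElem]
    linear_combination hf.eq + he.eq - 2 * h

end SpeckerOrder

section FRing

variable {R : Type*} [CommRing R] [PartialOrder R]

lemma exists_isGLB_pair_zero_sub_eq [IsOrderedAddMonoid R] (hsup : ∀ s t : R, ∃ x, IsLUB {s, t} x)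
    (a : R) : ∃ p q : R, IsGLB {p, q} 0 ∧ a = p - q := by
  obtain ⟨p, hp⟩ := hsup a 0
  obtain ⟨q, hq⟩ := hsup (-a) 0
  obtain ⟨hpa, hp0, hp⟩ := isLUB_pair_iff.1 hp
  obtain ⟨hqa, hq0, hq⟩ := isLUB_pair_iff.1 hq
  have hpq : p = q + a := by
    refine le_antisymm (hp _ (le_add_of_nonneg_left hq0) (neg_le_iff_add_nonneg.1 hqa)) ?_
    refine le_sub_iff_add_le.1 (hq _ ?_ (sub_nonneg.2 hpa))
    simpa [sub_eq_add_neg] using add_le_add_left hp0 (-a)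
  refine ⟨p, q, isGLB_pair_iff.2 ⟨hp0, hq0, fun v hvp hvq => ?_⟩, by rw [hpq, add_sub_cancel_left]⟩
  have hv : q ≤ q - v := hq _ (by rw [neg_le_sub_iff_le_add, ← hpq]; exact hvp) (sub_nonneg.2 hvq)
  exact (le_sub_self_iff q).1 hv

lemma mul_eq_zero_of_isGLB_pair_zero
    (hf : ∀ r s t : R, IsGLB {s, t} 0 → 0 ≤ r → IsGLB {r * s, t} 0) {p q : R}
    (h : IsGLB {p, q} 0) : p * q = 0 := by
  obtain ⟨hp, hq, -⟩ := isGLB_pair_iff.1 h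
  have h1 : IsGLB {p * q, p} 0 := hf p q p (Set.pair_comm p q ▸ h) hp
  have h2 := hf q p (p * q) (Set.pair_comm (p * q) p ▸ h1) hq
  rw [mul_comm q p, Set.pair_eq_singleton] at h2
  exact isGLB_singleton.unique h2

lemma mul_self_nonneg_of_fRing [IsOrderedAddMonoid R] (hsup : ∀ s t : R, ∃ x, IsLUB {s, t} x)
    (hmul : ∀ s t : R, 0 ≤ s → 0 ≤ t → 0 ≤ s * t)
    (hf : ∀ r s t : R, IsGLB {s, t} 0 → 0 ≤ r → IsGLB {r * s, t} 0) (a : R) : 0 ≤ a * a := by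
  obtain ⟨p, q, h, rfl⟩ := exists_isGLB_pair_zero_sub_eq hsup a
  obtain ⟨hp, hq, -⟩ := isGLB_pair_iff.1 h
  have hsq : (p - q) * (p - q) = p * p + q * q := by
    linear_combination (-2 : R) * mul_eq_zero_of_isGLB_pair_zero hf h
  rw [hsq]
  exact add_nonneg (hmul p p hp hp) (hmul q q hq hq)

end FRing

section Uniqueness

variable {D S : Type*} [CommRing D] [LinearOrder D] [IsStrictOrderedRing D] [CommRing S]
  [Algebra D S]

lemma nonneg_iff_orthNonnegDecomp [PartialOrder S] [IsOrderedAddMonoid S]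
    (hS : SpIdemGenerated D S) (hidem : ∀ e : S, IsIdempotentElem e → 0 ≤ e)
    (hmul : ∀ s t : S, 0 ≤ s → 0 ≤ t → 0 ≤ s * t)
    (hsmul : ∀ (a : D) (s : S), 0 ≤ a → 0 ≤ s → 0 ≤ a • s) (x : S) :
    0 ≤ x ↔ OrthNonnegDecomp D S x := by
  refine ⟨fun hx => ?_, ?_⟩
  · obtain ⟨ι, _, e, a, he, rfl⟩ := exists_completeOrthogonalIdempotents_sum_smul hS x
    refine OrthNonnegDecomp.of_forall_mul he fun k => ?_
    have hek := hidem _ (he.idem k)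
    rw [he.1.sum_smul_mul]
    rcases le_or_gt 0 (a k) with hk | hk
    · exact (he.idem k).orthNonnegDecomp.smul hk
    · have h1 : 0 ≤ a k • e k := he.1.sum_smul_mul a k ▸ hmul _ _ hx hek
      have h2 : 0 ≤ -(a k • e k) := neg_smul (a k) (e k) ▸ hsmul _ _ (neg_nonneg.2 hk.le) hek
      rw [le_antisymm (neg_nonneg.1 h2) h1]
      exact IsIdempotentElem.zero.orthNonnegDecomp
  · rintro ⟨n, a, e, ha, he, -, rfl⟩
    exact Finset.sum_nonneg fun i _ => hsmul _ _ (ha i) (hidem _ (he i))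

theorem IsFAlgebraOrder.eq_specOrder [NoZeroSMulDivisors D S] (hS : SpIdemGenerated D S)
    {iP : PartialOrder S} (h : IsFAlgebraOrder D S iP) : iP = specOrder D S := by
  unfold IsFAlgebraOrder at h
  let _ := iP
  obtain ⟨hsup, -, hadd, hmul, hsmul, hf⟩ := h
  have : IsOrderedAddMonoid S := { add_le_add_left := fun a b hab c => hadd a b c hab }
  have hidem (e : S) (he : IsIdempotentElem e) : 0 ≤ e :=
    he.eq ▸ mul_self_nonneg_of_fRing hsup hmul hf e
  refine PartialOrder.ext fun s t => ?_
  rw [← sub_nonneg, nonneg_iff_orthNonnegDecomp hS hidem hmul hsmul]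
  rfl

end Uniqueness

/-- a Specker `D`-algebra carries a unique partial order making it an
f-algebra over `D`; it is given by nonnegative orthogonal decompositions and restricts
to the usual order on idempotents. -/
theorem statement6 (D S : Type*) [CommRing D] [LinearOrder D] [IsStrictOrderedRing D] [CommRing S] [Algebra D S]
    (hS : IsSpecker D S) :
    ∃ iP : PartialOrder S, IsFAlgebraOrder D S iP ∧ OrderEqDecomp D S iP ∧
      OrderIdemUsual S iP ∧ ∀ iP' : PartialOrder S, IsFAlgebraOrder D S iP' → iP' = iP := by
  have : NoZeroSMulDivisors D S := ⟨hS.1 _ _⟩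
  exact ⟨specOrder D S, isFAlgebraOrder_specOrder hS.2, fun _ _ => Iff.rfl,
    orderIdemUsual_specOrder, fun _ h => h.eq_specOrder hS.2⟩
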